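/- arXiv:0912.3723 — 2 statements merged into one kernel-verified Lean document; each statement's English description precedes it below -/
import Mathlib

section
/- For a finite 2-dimensional simplicial complex, collapsibility is decidable by a greedy algorithm: if some sequence of elementary collapses reduces K to a point, then every maximal sequence of elementary collapses reduces K to a point (i.e., every collapsible 2-complex is extendably collapsible). -/
structure SC where
  faces : Finset (Finset ℕ)
  nonempty_mem : ∀ s ∈ faces, s.Nonempty
  down_closed : ∀ s ∈ faces, ∀ t ⊆ s, t.Nonempty → t ∈ faces

def SC.FreeFace (K : SC) (f : Finset ℕ) : Prop :=
  f ∈ K.faces ∧ ∃! F, F ∈ K.faces ∧ f ⊂ F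

def SC.ElemCollapse (K K' : SC) : Prop :=
  ∃ f F, f ∈ K.faces ∧ F ∈ K.faces ∧ f ⊂ F ∧
    (∀ G ∈ K.faces, f ⊂ G → G = F) ∧ K'.faces = (K.faces.erase f).erase F

def SC.CollapsesTo (K L : SC) : Prop := Relation.ReflTransGen SC.ElemCollapse K L

def pointSC (v : ℕ) : SC where
  faces := {{v}}
  nonempty_mem := by
    intro s hs; rw [Finset.mem_singleton] at hs; subst hs
    exact Finset.singleton_nonempty v
  down_closed := by
    intro s hs t ht hne
    rw [Finset.mem_singleton] at hs; subst hs
    rw [Finset.mem_singleton, ← hne.subset_singleton_iff]; exact ht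

def SC.Collapsible (K : SC) : Prop := ∃ v, K.CollapsesTo (pointSC v)

def SC.ExtendablyCollapsible (K : SC) : Prop :=
  K.Collapsible ∧ ∀ L : SC, K.CollapsesTo L → L.Collapsible

def SC.chi (K : SC) : ℤ := ∑ s ∈ K.faces, (-1 : ℤ) ^ (s.card - 1)

def SC.realization (K : SC) : Set (ℕ → ℝ) :=
  {x | ∃ s ∈ K.faces, (∀ i, x i ≠ 0 → i ∈ s) ∧ (∀ i, 0 ≤ x i) ∧ ∑ i ∈ s, x i = 1}

def generatedBy (F : Finset (Finset ℕ)) : SC where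
  faces := F.sup fun s => s.powerset.filter Finset.Nonempty
  nonempty_mem := by
    intro s hs
    rw [Finset.mem_sup] at hs
    obtain ⟨t, _, hst⟩ := hs
    exact (Finset.mem_filter.mp hst).2
  down_closed := by
    intro s hs t ht hne
    rw [Finset.mem_sup] at hs ⊢
    obtain ⟨u, hu, hsu⟩ := hs
    exact ⟨u, hu, Finset.mem_filter.mpr
      ⟨Finset.mem_powerset.mpr (ht.trans (Finset.mem_powerset.mp (Finset.mem_filter.mp hsu).1)), hne⟩⟩

-- basics
theorem SC.ext' {K L : SC} (h : K.faces = L.faces) : K = L := by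
  cases K; cases L; simp_all

def SC.del (K : SC) (f F : Finset ℕ) (hfF : f ⊂ F)
    (huniq : ∀ G ∈ K.faces, f ⊂ G → G = F) : SC where
  faces := (K.faces.erase f).erase F
  nonempty_mem := fun s hs => K.nonempty_mem s (Finset.mem_of_mem_erase (Finset.mem_of_mem_erase hs))
  down_closed := by
    intro s hs t ht hne
    have hsF : s ≠ F := Finset.ne_of_mem_erase hs
    have hsf : s ≠ f := Finset.ne_of_mem_erase (Finset.mem_of_mem_erase hs)
    have hsK : s ∈ K.faces := Finset.mem_of_mem_erase (Finset.mem_of_mem_erase hs)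
    have htK : t ∈ K.faces := K.down_closed s hsK t ht hne
    have htf : t ≠ f := by
      rintro rfl
      exact hsF (huniq s hsK (lt_of_le_of_ne ht (Ne.symm hsf)))
    have htF : t ≠ F := by
      rintro rfl
      exact hsF (huniq s hsK (lt_of_lt_of_le hfF ht))
    exact Finset.mem_erase.2 ⟨htF, Finset.mem_erase.2 ⟨htf, htK⟩⟩

theorem SC.elemCollapse_del (K : SC) (f F : Finset ℕ) (hf : f ∈ K.faces) (hF : F ∈ K.faces)
    (hfF : f ⊂ F) (huniq : ∀ G ∈ K.faces, f ⊂ G → G = F) :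
    K.ElemCollapse (K.del f F hfF huniq) :=
  ⟨f, F, hf, hF, hfF, huniq, rfl⟩

theorem free_card {K : SC} {f F : Finset ℕ} (hF : F ∈ K.faces) (hfF : f ⊂ F)
    (hf : f.Nonempty) (huniq : ∀ G ∈ K.faces, f ⊂ G → G = F) : F.card = f.card + 1 := by
  by_contra hne
  have hlt : f.card < F.card := Finset.card_lt_card hfF
  have h2 : f.card + 1 < F.card := lt_of_le_of_ne hlt (fun h => hne h.symm)
  obtain ⟨u, hfu, huF, hcard⟩ := Finset.exists_subsuperset_card_eq hfF.subset
    (Nat.le_succ _) (le_of_lt h2)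
  have huK : u ∈ K.faces := K.down_closed F hF u huF (hf.mono hfu)
  have hfu' : f ⊂ u := lt_of_le_of_ne hfu (fun h => by subst h; omega)
  have : u = F := huniq u huK hfu'
  subst this
  omega

/-- Elementary collapse whose free face has cardinality `n`. -/
def C (n : ℕ) (K K' : SC) : Prop :=
  ∃ f F, f.card = n ∧ f ∈ K.faces ∧ F ∈ K.faces ∧ f ⊂ F ∧
    (∀ G ∈ K.faces, f ⊂ G → G = F) ∧ K'.faces = (K.faces.erase f).erase F

theorem C_elem {n : ℕ} {K K' : SC} (h : C n K K') : K.ElemCollapse K' := by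
  obtain ⟨f, F, _, h⟩ := h; exact ⟨f, F, h⟩

theorem mem_erase2 {s f F : Finset ℕ} {A : Finset (Finset ℕ)} :
    s ∈ (A.erase f).erase F ↔ s ≠ F ∧ s ≠ f ∧ s ∈ A := by
  simp [Finset.mem_erase, and_assoc]

theorem collapse_subset {K K' : SC} (h : K.ElemCollapse K') : K'.faces ⊆ K.faces := by
  obtain ⟨f, F, _, _, _, _, hK'⟩ := h
  rw [hK']
  exact fun s hs => (mem_erase2.1 hs).2.2

theorem collapsesTo_subset {K L : SC} (h : K.CollapsesTo L) : L.faces ⊆ K.faces := by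
  induction h with
  | refl => exact Finset.Subset.refl _
  | tail _ hstep ih => exact (collapse_subset hstep).trans ih

theorem elem_card_cases {K K' : SC} (hdim : ∀ s ∈ K.faces, s.card ≤ 3)
    (h : K.ElemCollapse K') : C 1 K K' ∨ C 2 K K' := by
  obtain ⟨f, F, hf, hF, hfF, huniq, hK'⟩ := h
  have hcard := free_card hF hfF (K.nonempty_mem f hf) huniq
  have h1 : 1 ≤ f.card := Finset.card_pos.2 (K.nonempty_mem f hf)
  have h3 : F.card ≤ 3 := hdim F hF
  have h2 : f.card ≤ 2 := by omega
  interval_cases hc : f.card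
  · exact Or.inl ⟨f, F, hc, hf, hF, hfF, huniq, hK'⟩
  · exact Or.inr ⟨f, F, hc, hf, hF, hfF, huniq, hK'⟩

theorem card_ne {s t : Finset ℕ} (h : s.card ≠ t.card) : s ≠ t := fun e => h (by rw [e])

theorem swap_collapse {K K1 K2 : SC} (hdim : ∀ s ∈ K.faces, s.card ≤ 3)
    (h1 : C 1 K K1) (h2 : C 2 K1 K2) : ∃ K1', C 2 K K1' ∧ C 1 K1' K2 := by
  obtain ⟨p, P, hpc, hp, hP, hpP, hpuniq, hK1⟩ := h1
  obtain ⟨e, T, hec, he, hT, heT, heuniq, hK2⟩ := h2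
  have hPc : P.card = 2 := by
    have := free_card hP hpP (K.nonempty_mem p hp) hpuniq; omega
  have hTc : T.card = 3 := by
    have hTK : T ∈ K.faces := by rw [hK1] at hT; exact (mem_erase2.1 hT).2.2
    have := free_card hT heT (K1.nonempty_mem e he) heuniq; omega
  have heK : e ∈ K.faces := by rw [hK1] at he; exact (mem_erase2.1 he).2.2
  have hTK : T ∈ K.faces := by rw [hK1] at hT; exact (mem_erase2.1 hT).2.2
  have heP : e ≠ P := by rw [hK1] at he; exact (mem_erase2.1 he).1
  have heuniqK : ∀ G ∈ K.faces, e ⊂ G → G = T := by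
    intro G hG heG
    have hGc : 2 < G.card := by rw [← hec]; exact Finset.card_lt_card heG
    have : G ∈ K1.faces := by
      rw [hK1, mem_erase2]
      exact ⟨card_ne (by omega), card_ne (by omega), hG⟩
    exact heuniq G this heG
  refine ⟨K.del e T heT heuniqK, ⟨e, T, hec, heK, hTK, heT, heuniqK, rfl⟩, p, P, hpc, ?_⟩
  have hpmem : p ∈ (K.del e T heT heuniqK).faces :=
    mem_erase2.2 ⟨card_ne (by omega), card_ne (by omega), hp⟩
  have hPmem : P ∈ (K.del e T heT heuniqK).faces :=
    mem_erase2.2 ⟨card_ne (by omega), Ne.symm heP, hP⟩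
  refine ⟨hpmem, hPmem, hpP, fun G hG hpG => hpuniq G (mem_erase2.1 hG).2.2 hpG, ?_⟩
  rw [hK2, hK1]
  ext s
  simp only [SC.del, Finset.mem_erase]
  tauto

theorem push_collapse {K K1 T : SC} (hdim : ∀ s ∈ K.faces, s.card ≤ 3)
    (h1 : C 1 K K1) (h2 : Relation.ReflTransGen (C 2) K1 T) :
    ∃ T0, Relation.ReflTransGen (C 2) K T0 ∧ C 1 T0 T := by
  induction h2 using Relation.ReflTransGen.head_induction_on generalizing K with
  | refl => exact ⟨K, Relation.ReflTransGen.refl, h1⟩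
  | head hstep _ ih =>
    obtain ⟨K1', hK1'2, hK1'1⟩ := swap_collapse hdim h1 hstep
    have hdim' : ∀ s ∈ K1'.faces, s.card ≤ 3 := fun s hs =>
      hdim s (collapse_subset (C_elem hK1'2) hs)
    obtain ⟨T0, hT0, hT0T⟩ := ih hdim' hK1'1
    exact ⟨T0, Relation.ReflTransGen.head hK1'2 hT0, hT0T⟩

theorem normal_form : ∀ {K : SC} {v : ℕ}, K.CollapsesTo (pointSC v) →
    (∀ s ∈ K.faces, s.card ≤ 3) →
    ∃ T, Relation.ReflTransGen (C 2) K T ∧ Relation.ReflTransGen (C 1) T (pointSC v) := by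
  intro K v h
  induction h using Relation.ReflTransGen.head_induction_on with
  | refl => exact fun _ => ⟨pointSC v, Relation.ReflTransGen.refl, Relation.ReflTransGen.refl⟩
  | head hstep htail ih =>
    rename_i A B
    intro hdim
    have hdim' : ∀ s ∈ B.faces, s.card ≤ 3 := fun s hs => hdim s (collapse_subset hstep hs)
    obtain ⟨T, h2, h1⟩ := ih hdim'
    rcases elem_card_cases hdim hstep with hc1 | hc2
    · obtain ⟨T0, hT0, hT0T⟩ := push_collapse hdim hc1 h2
      exact ⟨T0, hT0, Relation.ReflTransGen.head hT0T h1⟩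
    · exact ⟨T, Relation.ReflTransGen.head hc2 h2, h1⟩

def conn (A : Finset (Finset ℕ)) (a b : ℕ) : Prop :=
  Relation.ReflTransGen (fun p q => ({p, q} : Finset ℕ) ∈ A) a b

theorem conn_mono {A B : Finset (Finset ℕ)} (h : A ⊆ B) {a b : ℕ} (hc : conn A a b) :
    conn B a b := Relation.ReflTransGen.mono (fun _ _ hs => h hs) _ _ hc

theorem conn_symm {A : Finset (Finset ℕ)} {a b : ℕ} (hc : conn A a b) : conn A b a :=
  by
    haveI : Std.Symm (fun p q : ℕ => ({p, q} : Finset ℕ) ∈ A) := ⟨fun p q hs => by rwa [Finset.pair_comm]⟩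
    exact Std.Symm.symm (r := Relation.ReflTransGen (fun p q : ℕ => ({p, q} : Finset ℕ) ∈ A)) _ _ hc

theorem conn_step {A : Finset (Finset ℕ)} {a b : ℕ} (h : ({a, b} : Finset ℕ) ∈ A) :
    conn A a b := Relation.ReflTransGen.single h

theorem conn_first {A : Finset (Finset ℕ)} {b : ℕ} :
    ∀ {a : ℕ}, conn A a b → a ≠ b → ∃ c, c ≠ a ∧ ({a, c} : Finset ℕ) ∈ A := by
  intro a hc
  induction hc using Relation.ReflTransGen.head_induction_on with
  | refl => exact fun h => absurd rfl h
  | head hstep htail ih =>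
    rename_i p q
    intro hne
    by_cases hpq : q = p
    · subst hpq; exact ih hne
    · exact ⟨q, hpq, hstep⟩

/-- structure of a 1-dimensional elementary collapse -/
theorem c1_struct {G G' : SC} (h : C 1 G G') :
    ∃ v w, v ≠ w ∧ {v} ∈ G.faces ∧ ({v, w} : Finset ℕ) ∈ G.faces ∧
      (∀ H ∈ G.faces, {v} ⊂ H → H = {v, w}) ∧
      G'.faces = (G.faces.erase {v}).erase {v, w} ∧
      {v} ∉ G'.faces ∧ ({v, w} : Finset ℕ) ∉ G'.faces ∧ {w} ∈ G'.faces := by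
  obtain ⟨f, F, hfc, hf, hF, hfF, huniq, hG'⟩ := h
  obtain ⟨v, rfl⟩ := Finset.card_eq_one.1 hfc
  have hFc : F.card = 2 := by
    have := free_card hF hfF (G.nonempty_mem _ hf) huniq; omega
  have hvF : v ∈ F := hfF.subset (Finset.mem_singleton_self v)
  obtain ⟨a, b, hab, rfl⟩ := Finset.card_eq_two.1 hFc
  have hw : ∃ w, w ≠ v ∧ ({a, b} : Finset ℕ) = {v, w} := by
    rcases Finset.mem_insert.1 hvF with rfl | hb
    · exact ⟨b, fun h => hab h.symm, rfl⟩
    · rw [Finset.mem_singleton] at hb; subst hb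
      exact ⟨a, fun h => hab h, Finset.pair_comm a v⟩
  obtain ⟨w, hwv, hFw⟩ := hw
  rw [hFw] at hF hfF hG'
  simp only [hFw] at huniq
  refine ⟨v, w, hwv.symm, hf, hF, huniq, hG', ?_, ?_, ?_⟩
  · rw [hG', mem_erase2]; tauto
  · rw [hG']; intro hmem; exact (mem_erase2.1 hmem).1 rfl
  · rw [hG', mem_erase2]
    refine ⟨?_, ?_, G.down_closed _ hF {w} (by simp) ⟨w, Finset.mem_singleton_self w⟩⟩
    · intro hcontra
      have : v ∈ ({w} : Finset ℕ) := hcontra ▸ Finset.mem_insert_self v {w}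
      exact hwv.symm (Finset.mem_singleton.1 this)
    · intro hcontra
      exact hwv (Finset.singleton_injective hcontra)

theorem c1_insert {G G' : SC} {v w : ℕ}
    (hv : {v} ∈ G.faces) (hE : ({v, w} : Finset ℕ) ∈ G.faces)
    (hG' : G'.faces = (G.faces.erase {v}).erase {v, w}) (hvw : v ≠ w) :
    G.faces = insert {v} (insert ({v, w} : Finset ℕ) G'.faces) := by
  have hne : ({v} : Finset ℕ) ≠ {v, w} := by
    intro h
    have : w ∈ ({v} : Finset ℕ) := h ▸ Finset.mem_insert.2 (Or.inr (Finset.mem_singleton_self w))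
    exact hvw (Finset.mem_singleton.1 this).symm
  rw [hG']
  rw [Finset.insert_erase, Finset.insert_erase hv]
  exact Finset.mem_erase.2 ⟨Ne.symm hne, hE⟩

/-- facts propagated along a phase-1 chain down to a point -/
theorem c1_chain_facts {T : SC} {v : ℕ}
    (h : Relation.ReflTransGen (C 1) T (pointSC v)) :
    (∀ s ∈ T.faces, s.card ≤ 2) ∧
    (T.faces.card + 1 = 2 * (T.faces.filter (fun s => s.card = 1)).card) ∧
    (∀ a b, {a} ∈ T.faces → {b} ∈ T.faces → conn T.faces a b) := by
  induction h using Relation.ReflTransGen.head_induction_on with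
  | refl =>
    refine ⟨?_, ?_, ?_⟩
    · intro s hs
      rw [show (pointSC v).faces = {{v}} from rfl, Finset.mem_singleton] at hs
      subst hs; simp
    · simp [pointSC, Finset.filter_singleton]
    · intro a b ha hb
      rw [show (pointSC v).faces = {{v}} from rfl, Finset.mem_singleton] at ha hb
      have : a = v := Finset.singleton_injective ha
      have hb' : b = v := Finset.singleton_injective hb
      subst this; subst hb'; exact Relation.ReflTransGen.refl
  | head hstep htail ih =>
    rename_i G G'
    obtain ⟨hcards, hcount, hconn⟩ := ih
    obtain ⟨x, w, hxw, hx, hE, huniq, hG', hxout, hEout, hwin⟩ := c1_struct hstep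
    have hfaces := c1_insert hx hE hG' hxw
    have hxE : ({x} : Finset ℕ) ≠ {x, w} := fun h => by
      have : w ∈ ({x} : Finset ℕ) := h ▸ Finset.mem_insert.2 (Or.inr (Finset.mem_singleton_self w))
      exact hxw (Finset.mem_singleton.1 this).symm
    have hxnot : ({x} : Finset ℕ) ∉ insert ({x, w} : Finset ℕ) G'.faces := by
      simp only [Finset.mem_insert]
      rintro (h | h); exact hxE h; exact hxout h
    have hcard2 : ({x, w} : Finset ℕ).card = 2 := by
      rw [Finset.card_insert_of_notMem (by simpa using hxw), Finset.card_singleton]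
    refine ⟨?_, ?_, ?_⟩
    · intro s hs
      rw [hfaces] at hs
      rcases Finset.mem_insert.1 hs with rfl | hs
      · simp
      rcases Finset.mem_insert.1 hs with rfl | hs
      · omega
      · exact hcards s hs
    · rw [hfaces, Finset.card_insert_of_notMem hxnot, Finset.card_insert_of_notMem hEout]
      rw [Finset.filter_insert, Finset.filter_insert,
          if_pos (Finset.card_singleton x), if_neg (by omega),
          Finset.card_insert_of_notMem (fun h => hxout (Finset.mem_filter.1 h).1)]
      omega
    · have hsub : G'.faces ⊆ G.faces := by
        rw [hG']; exact fun s hs => (mem_erase2.1 hs).2.2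
      intro a b ha hb
      have hvert : ∀ c, {c} ∈ G.faces → c ≠ x → {c} ∈ G'.faces := by
        intro c hc hcx
        rw [hG', mem_erase2]
        refine ⟨?_, ?_, hc⟩
        · exact card_ne (by rw [Finset.card_singleton, hcard2]; omega)
        · exact fun h => hcx (Finset.singleton_injective h)
      by_cases hax : a = x <;> by_cases hbx : b = x
      · subst hax; subst hbx; exact Relation.ReflTransGen.refl
      · subst hax
        exact Relation.ReflTransGen.head hE
          (conn_mono hsub (hconn w b hwin (hvert b hb hbx)))
      · subst hbx
        refine Relation.ReflTransGen.trans
          (conn_mono hsub (hconn a w (hvert a ha hax) hwin)) ?_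
        exact conn_step (by rwa [Finset.pair_comm])
      · exact conn_mono hsub (hconn a b (hvert a ha hax) (hvert b hb hbx))

theorem conn_avoid {A : Finset (Finset ℕ)} {a w : ℕ} (hwa : w ≠ a)
    (huniq : ∀ H ∈ A, a ∈ H → H = {a} ∨ H = {a, w}) {c : ℕ} (hca : c ≠ a) :
    ∀ {b : ℕ}, conn A b c →
      conn ((A.erase {a}).erase ({a, w} : Finset ℕ)) (if b = a then w else b) c := by
  intro b hc
  induction hc using Relation.ReflTransGen.head_induction_on with
  | refl => rw [if_neg hca]; exact Relation.ReflTransGen.refl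
  | head hstep htail ih =>
    rename_i p q
    by_cases hpa : p = a <;> by_cases hqa : q = a
    · rw [if_pos hpa]; rw [if_pos hqa] at ih; exact ih
    · rw [if_pos hpa]
      rw [if_neg hqa] at ih
      have haq : a ∈ ({p, q} : Finset ℕ) := by
        rw [← hpa]; exact Finset.mem_insert_self p {q}
      rcases huniq _ hstep haq with h | h
      · have : q ∈ ({a} : Finset ℕ) := by
          rw [← h]; exact Finset.mem_insert.2 (Or.inr (Finset.mem_singleton_self q))
        exact absurd (Finset.mem_singleton.1 this) hqa
      · have hq : q ∈ ({a, w} : Finset ℕ) := by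
          rw [← h]; exact Finset.mem_insert.2 (Or.inr (Finset.mem_singleton_self q))
        rcases Finset.mem_insert.1 hq with h' | h'
        · exact absurd h' hqa
        · rw [Finset.mem_singleton.1 h'] at ih; exact ih
    · rw [if_neg hpa]
      rw [if_pos hqa] at ih
      have haq : a ∈ ({p, q} : Finset ℕ) := by
        rw [← hqa]; exact Finset.mem_insert.2 (Or.inr (Finset.mem_singleton_self q))
      rcases huniq _ hstep haq with h | h
      · have : p ∈ ({a} : Finset ℕ) := by rw [← h]; exact Finset.mem_insert_self p {q}
        exact absurd (Finset.mem_singleton.1 this) hpa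
      · have hp : p ∈ ({a, w} : Finset ℕ) := by rw [← h]; exact Finset.mem_insert_self p {q}
        rcases Finset.mem_insert.1 hp with h' | h'
        · exact absurd h' hpa
        · rw [Finset.mem_singleton.1 h']; exact ih
    · rw [if_neg hpa]
      rw [if_neg hqa] at ih
      refine Relation.ReflTransGen.head ?_ ih
      rw [mem_erase2]
      refine ⟨?_, ?_, hstep⟩
      · intro h
        have : a ∈ ({p, q} : Finset ℕ) := by rw [h]; exact Finset.mem_insert_self a {w}
        rcases Finset.mem_insert.1 this with h' | h'
        · exact hpa h'.symm
        · exact hqa (Finset.mem_singleton.1 h').symm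
      · intro h
        have : p ∈ ({a} : Finset ℕ) := by rw [← h]; exact Finset.mem_insert_self p {q}
        exact hpa (Finset.mem_singleton.1 this)

theorem vert_mem {G : SC} {a : ℕ} : a ∈ G.faces.biUnion id ↔ {a} ∈ G.faces := by
  constructor
  · intro h
    obtain ⟨s, hs, ha⟩ := Finset.mem_biUnion.1 h
    exact G.down_closed s hs {a} (Finset.singleton_subset_iff.2 ha) ⟨a, Finset.mem_singleton_self a⟩
  · intro h
    exact Finset.mem_biUnion.2 ⟨{a}, h, Finset.mem_singleton_self a⟩

theorem tree_collapsible : ∀ n : ℕ, ∀ G : SC, G.faces.card ≤ n →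
    (∀ s ∈ G.faces, s.card ≤ 2) →
    (G.faces.card + 1 = 2 * (G.faces.filter (fun s => s.card = 1)).card) →
    (∀ a b, {a} ∈ G.faces → {b} ∈ G.faces → conn G.faces a b) →
    G.Collapsible := by
  intro n
  induction n with
  | zero =>
    intro G hn hcards hcount hconn
    rw [Nat.le_zero, Finset.card_eq_zero] at hn
    rw [hn] at hcount
    simp at hcount
  | succ n ih =>
    intro G hn hcards hcount hconn
    set V := G.faces.filter (fun s => s.card = 1) with hV
    by_cases hcard1 : G.faces.card = 1
    · -- G is a point
      have hVc : V.card = 1 := by omega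
      obtain ⟨s, hs⟩ := Finset.card_eq_one.1 hVc
      have hsV : s ∈ V := hs ▸ Finset.mem_singleton_self s
      have hsf : s ∈ G.faces := (Finset.mem_filter.1 hsV).1
      have hsc : s.card = 1 := (Finset.mem_filter.1 hsV).2
      obtain ⟨a, rfl⟩ := Finset.card_eq_one.1 hsc
      have hfaces : G.faces = {{a}} := by
        obtain ⟨t, ht⟩ := Finset.card_eq_one.1 hcard1
        rw [ht]
        rw [ht] at hsf
        rw [Finset.mem_singleton] at hsf
        rw [hsf]
      have : G = pointSC a := SC.ext' hfaces
      exact ⟨a, this ▸ Relation.ReflTransGen.refl⟩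
    · -- find a leaf and collapse it
      have hfne : G.faces.Nonempty := by
        rw [← Finset.card_pos]; omega
      have hodd : G.faces.card % 2 = 1 := by omega
      have hc3 : 3 ≤ G.faces.card := by omega
      have hV2 : 2 ≤ V.card := by omega
      set E := G.faces.filter (fun s => s.card = 2) with hE
      have hEcompl : E = G.faces.filter (fun s => ¬ s.card = 1) := by
        apply Finset.filter_congr
        intro s hs
        have h1 : 1 ≤ s.card := Finset.card_pos.2 (G.nonempty_mem s hs)
        have h2 : s.card ≤ 2 := hcards s hs
        exact ⟨fun h => by omega, fun h => by omega⟩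
      have hsplit : V.card + E.card = G.faces.card := by
        rw [hEcompl, hV]
        exact Finset.card_filter_add_card_filter_not _
      set verts := G.faces.biUnion id with hverts
      have hVimage : V = verts.image (fun a => ({a} : Finset ℕ)) := by
        ext s
        simp only [Finset.mem_filter, Finset.mem_image, hV]
        constructor
        · rintro ⟨hsf, hsc⟩
          obtain ⟨a, rfl⟩ := Finset.card_eq_one.1 hsc
          exact ⟨a, vert_mem.2 hsf, rfl⟩
        · rintro ⟨a, ha, rfl⟩
          exact ⟨vert_mem.1 ha, Finset.card_singleton a⟩
      have hVcard : V.card = verts.card := by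
        rw [hVimage]
        exact Finset.card_image_of_injective _ Finset.singleton_injective
      -- double counting
      have hsum : ∑ a ∈ verts, (E.filter (fun s => a ∈ s)).card = 2 * E.card := by
        have h1 : ∀ a ∈ verts, (E.filter (fun s => a ∈ s)).card
            = ∑ s ∈ E, if a ∈ s then 1 else 0 := by
          intro a _
          rw [Finset.card_filter]
        rw [Finset.sum_congr rfl h1, Finset.sum_comm]
        have h2 : ∀ s ∈ E, (∑ a ∈ verts, if a ∈ s then 1 else 0) = s.card := by
          intro s hs
          rw [← Finset.card_filter]
          congr 1
          rw [Finset.filter_mem_eq_inter, Finset.inter_eq_right]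
          intro a ha
          exact Finset.mem_biUnion.2 ⟨s, (Finset.mem_filter.1 hs).1, ha⟩
        rw [Finset.sum_congr rfl h2]
        rw [Finset.sum_congr rfl (fun s hs => (Finset.mem_filter.1 hs).2)]
        rw [Finset.sum_const, smul_eq_mul, mul_comm]
      -- find low-degree vertex
      have hEc : E.card + 1 = verts.card := by
        rw [← hVcard]; omega
      have hv1 : 1 ≤ verts.card := by omega
      have hlt : ∑ a ∈ verts, (E.filter (fun s => a ∈ s)).card < ∑ a ∈ verts, 2 := by
        rw [hsum, Finset.sum_const, smul_eq_mul]; omega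
      obtain ⟨a, haverts, hdeg⟩ := Finset.exists_lt_of_sum_lt hlt
      have ha1 : ({a} : Finset ℕ) ∈ G.faces := vert_mem.1 haverts
      -- degree is at least one
      have hother : ∃ b, b ≠ a ∧ ({b} : Finset ℕ) ∈ G.faces := by
        obtain ⟨s, hs, t, ht, hst⟩ := Finset.one_lt_card.1 hV2
        by_cases hsa : s = {a}
        · obtain ⟨b, rfl⟩ := Finset.card_eq_one.1 (Finset.mem_filter.1 ht).2
          refine ⟨b, ?_, (Finset.mem_filter.1 ht).1⟩
          intro hba; apply hst; rw [hsa, hba]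
        · obtain ⟨b, rfl⟩ := Finset.card_eq_one.1 (Finset.mem_filter.1 hs).2
          refine ⟨b, ?_, (Finset.mem_filter.1 hs).1⟩
          intro hba; exact hsa (by rw [hba])
      obtain ⟨b, hba, hb1⟩ := hother
      obtain ⟨c, hca, hedge⟩ := conn_first (hconn a b ha1 hb1) (Ne.symm hba)
      have hacE : ({a, c} : Finset ℕ) ∈ E := by
        rw [hE, Finset.mem_filter]
        refine ⟨hedge, ?_⟩
        rw [Finset.card_insert_of_notMem (by simpa using Ne.symm hca), Finset.card_singleton]
      have hdeg1 : (E.filter (fun s => a ∈ s)).card = 1 := by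
        have : ({a, c} : Finset ℕ) ∈ E.filter (fun s => a ∈ s) :=
          Finset.mem_filter.2 ⟨hacE, Finset.mem_insert_self a {c}⟩
        have hpos : 0 < (E.filter (fun s => a ∈ s)).card :=
          Finset.card_pos.2 ⟨_, this⟩
        omega
      obtain ⟨E0, hE0⟩ := Finset.card_eq_one.1 hdeg1
      have hE0mem : E0 ∈ E.filter (fun s => a ∈ s) := hE0 ▸ Finset.mem_singleton_self E0
      have hE0f : E0 ∈ G.faces := (Finset.mem_filter.1 (Finset.mem_filter.1 hE0mem).1).1
      have hE0c : E0.card = 2 := (Finset.mem_filter.1 (Finset.mem_filter.1 hE0mem).1).2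
      have haE0 : a ∈ E0 := (Finset.mem_filter.1 hE0mem).2
      have hE0aw : ∃ w, w ≠ a ∧ E0 = {a, w} := by
        obtain ⟨p, q, hpq, rfl⟩ := Finset.card_eq_two.1 hE0c
        rcases Finset.mem_insert.1 haE0 with h | h
        · exact ⟨q, fun hq => hpq (by rw [hq, h]), by rw [h]⟩
        · rw [Finset.mem_singleton] at h
          exact ⟨p, fun hp => hpq (by rw [hp, h]), by rw [h, Finset.pair_comm]⟩
      obtain ⟨w, hwa, hE0w⟩ := hE0aw
      have huniq2 : ∀ H ∈ G.faces, ({a} : Finset ℕ) ⊂ H → H = E0 := by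
        intro H hH hssub
        have hHc : H.card = 2 := by
          have h1 : 1 < H.card := by
            have := Finset.card_lt_card hssub
            simpa using this
          have h2 : H.card ≤ 2 := hcards H hH
          omega
        have : H ∈ E.filter (fun s => a ∈ s) := Finset.mem_filter.2
          ⟨Finset.mem_filter.2 ⟨hH, hHc⟩, hssub.subset (Finset.mem_singleton_self a)⟩
        rw [hE0] at this
        exact Finset.mem_singleton.1 this
      have hssub : ({a} : Finset ℕ) ⊂ E0 :=
        lt_of_le_of_ne (Finset.singleton_subset_iff.2 haE0)
          (card_ne (by rw [Finset.card_singleton, hE0c]; omega))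
      set G' := G.del {a} E0 hssub huniq2 with hG'
      have hG'faces : G'.faces = (G.faces.erase {a}).erase E0 := rfl
      have hE0mem' : E0 ∈ G.faces.erase {a} :=
        Finset.mem_erase.2 ⟨card_ne (by rw [Finset.card_singleton, hE0c]; omega), hE0f⟩
      have hcard' : G'.faces.card = G.faces.card - 2 := by
        rw [hG'faces, Finset.card_erase_of_mem hE0mem', Finset.card_erase_of_mem ha1]
        omega
      have hfilt : G'.faces.filter (fun s => s.card = 1) = V.erase {a} := by
        ext s
        rw [hG'faces]
        simp only [Finset.mem_filter, mem_erase2, Finset.mem_erase, hV]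
        constructor
        · rintro ⟨⟨hsE0, hsa, hsf⟩, hsc⟩; exact ⟨hsa, hsf, hsc⟩
        · rintro ⟨hsa, hsf, hsc⟩
          exact ⟨⟨fun h => by rw [h] at hsc; omega, hsa, hsf⟩, hsc⟩
      have haV : ({a} : Finset ℕ) ∈ V := Finset.mem_filter.2 ⟨ha1, Finset.card_singleton a⟩
      have hcount' : G'.faces.card + 1 = 2 * (G'.faces.filter (fun s => s.card = 1)).card := by
        rw [hcard', hfilt, Finset.card_erase_of_mem haV]
        omega
      have huniqaw : ∀ H ∈ G.faces, a ∈ H → H = {a} ∨ H = ({a, w} : Finset ℕ) := by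
        intro H hH haH
        have h1 : 1 ≤ H.card := Finset.card_pos.2 (G.nonempty_mem H hH)
        have h2 : H.card ≤ 2 := hcards H hH
        interval_cases hc : H.card
        · left
          obtain ⟨x, rfl⟩ := Finset.card_eq_one.1 hc
          rw [Finset.mem_singleton.1 haH]
        · right
          rw [← hE0w]
          exact huniq2 H hH (lt_of_le_of_ne (Finset.singleton_subset_iff.2 haH)
            (card_ne (by rw [Finset.card_singleton, hc]; omega)))
      have hconn' : ∀ p q, ({p} : Finset ℕ) ∈ G'.faces → ({q} : Finset ℕ) ∈ G'.faces →
          conn G'.faces p q := by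
        intro p q hp hq
        rw [hG'faces, mem_erase2] at hp hq
        have hpa : p ≠ a := fun h => hp.2.1 (by rw [h])
        have hqa : q ≠ a := fun h => hq.2.1 (by rw [h])
        have := conn_avoid hwa huniqaw hqa (hconn p q hp.2.2 hq.2.2)
        rw [if_neg hpa] at this
        rw [hG'faces, hE0w]
        exact this
      have hcards' : ∀ s ∈ G'.faces, s.card ≤ 2 := by
        intro s hs
        rw [hG'faces] at hs
        exact hcards s (mem_erase2.1 hs).2.2
      obtain ⟨v, hv⟩ := ih G' (by rw [hcard']; omega) hcards' hcount' hconn'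
      exact ⟨v, Relation.ReflTransGen.head
        (SC.elemCollapse_del G {a} E0 ha1 hE0f hssub huniq2) hv⟩

theorem c2_P_card {A A' : SC} {p P : Finset ℕ} (hpc : p.card = 2) (hp : p ∈ A.faces)
    (hP : P ∈ A.faces) (hpP : p ⊂ P) (huniq : ∀ G ∈ A.faces, p ⊂ G → G = P) :
    P.card = 3 := by
  have := free_card hP hpP (A.nonempty_mem p hp) huniq
  omega

theorem c2_step_facts {A A' : SC} (h : C 2 A A') {f : Finset ℕ} (hfc : f.card = 2)
    (hf : f ∈ A.faces) (hnocof : ∀ H ∈ A.faces, ¬ f ⊂ H) :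
    f ∈ A'.faces ∧ (∀ H ∈ A'.faces, ¬ f ⊂ H) := by
  obtain ⟨p, P, hpc, hp, hP, hpP, huniq, hA'⟩ := h
  have hPc : P.card = 3 := c2_P_card (A' := A') hpc hp hP hpP huniq
  have hpf : p ≠ f := by
    rintro rfl
    exact hnocof P hP hpP
  have hPf : P ≠ f := card_ne (by omega)
  constructor
  · rw [hA', mem_erase2]; exact ⟨Ne.symm hPf, Ne.symm hpf, hf⟩
  · intro H hH
    rw [hA', mem_erase2] at hH
    exact hnocof H hH.2.2

theorem c2_chain_keeps : ∀ {A T : SC}, Relation.ReflTransGen (C 2) A T → ∀ {f : Finset ℕ},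
    f.card = 2 → f ∈ A.faces → (∀ H ∈ A.faces, ¬ f ⊂ H) →
    f ∈ T.faces ∧ (∀ H ∈ T.faces, ¬ f ⊂ H) := by
  intro A T h
  induction h using Relation.ReflTransGen.head_induction_on with
  | refl => intro f hfc hf hnocof; exact ⟨hf, hnocof⟩
  | head hstep htail ih =>
    intro f hfc hf hnocof
    obtain ⟨hf', hnocof'⟩ := c2_step_facts hstep hfc hf hnocof
    exact ih hfc hf' hnocof'

theorem c2_conn_erase {A A' : SC} (h : C 2 A A') {f : Finset ℕ} (hfc : f.card = 2)
    (hnocof : ∀ H ∈ A.faces, ¬ f ⊂ H) {a b : ℕ}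
    (hc : conn (A.faces.erase f) a b) : conn (A'.faces.erase f) a b := by
  obtain ⟨p, P, hpc, hp, hP, hpP, huniq, hA'⟩ := h
  have hPc : P.card = 3 := c2_P_card (A' := A') hpc hp hP hpP huniq
  induction hc with
  | refl => exact Relation.ReflTransGen.refl
  | tail hcd hstep ih =>
    rename_i c d
    refine Relation.ReflTransGen.trans ih ?_
    have hcd' : ({c, d} : Finset ℕ) ∈ A.faces := Finset.mem_of_mem_erase hstep
    have hcdf : ({c, d} : Finset ℕ) ≠ f := Finset.ne_of_mem_erase hstep
    by_cases hcdp : ({c, d} : Finset ℕ) = p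
    · -- rerouted through the third vertex of P
      obtain ⟨u, huP, hup⟩ := Finset.exists_of_ssubset hpP
      have hcP : c ∈ P := hpP.subset (hcdp ▸ Finset.mem_insert_self c {d})
      have hdP : d ∈ P := hpP.subset (hcdp ▸ Finset.mem_insert.2
        (Or.inr (Finset.mem_singleton_self d)))
      have he1 : ({c, u} : Finset ℕ) ∈ A.faces := A.down_closed P hP _
        (Finset.insert_subset hcP (Finset.singleton_subset_iff.2 huP))
        ⟨c, Finset.mem_insert_self c {u}⟩
      have he2 : ({u, d} : Finset ℕ) ∈ A.faces := A.down_closed P hP _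
        (Finset.insert_subset huP (Finset.singleton_subset_iff.2 hdP))
        ⟨u, Finset.mem_insert_self u {d}⟩
      have hmm : ∀ s : Finset ℕ, s ∈ A.faces → u ∈ s → s.card ≤ 2 → s ≠ f →
          s ∈ (A'.faces.erase f) := by
        intro s hs hus hsc hsf
        rw [hA']
        refine Finset.mem_erase.2 ⟨hsf, mem_erase2.2 ⟨card_ne (by omega), ?_, hs⟩⟩
        intro hsp
        exact hup (hsp ▸ hus)
      have hc1 : ({c, u} : Finset ℕ).card ≤ 2 := by
        apply le_trans (Finset.card_insert_le c {u}); simp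
      have hc2 : ({u, d} : Finset ℕ).card ≤ 2 := by
        apply le_trans (Finset.card_insert_le u {d}); simp
      have hf1 : ({c, u} : Finset ℕ) ≠ f := by
        intro hh
        refine hnocof P hP ?_
        rw [← hh]
        refine lt_of_le_of_ne (Finset.insert_subset hcP (Finset.singleton_subset_iff.2 huP)) ?_
        exact card_ne (by omega)
      have hf2 : ({u, d} : Finset ℕ) ≠ f := by
        intro hh
        refine hnocof P hP ?_
        rw [← hh]
        refine lt_of_le_of_ne (Finset.insert_subset huP (Finset.singleton_subset_iff.2 hdP)) ?_
        exact card_ne (by omega)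
      exact Relation.ReflTransGen.head (hmm _ he1 (Finset.mem_insert.2
          (Or.inr (Finset.mem_singleton_self u))) hc1 hf1)
        (Relation.ReflTransGen.single (hmm _ he2 (Finset.mem_insert_self u {d}) hc2 hf2))
    · -- edge survives
      have hcdP : ({c, d} : Finset ℕ) ≠ P := by
        apply card_ne
        have := Finset.card_insert_le c ({d} : Finset ℕ)
        simp only [Finset.card_singleton] at this
        omega
      refine Relation.ReflTransGen.single ?_
      rw [hA']
      exact Finset.mem_erase.2 ⟨hcdf, mem_erase2.2 ⟨hcdP, hcdp, hcd'⟩⟩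

theorem c2_chain_conn_erase {a b : ℕ} : ∀ {A T : SC}, Relation.ReflTransGen (C 2) A T →
    ∀ {f : Finset ℕ}, f.card = 2 → f ∈ A.faces → (∀ H ∈ A.faces, ¬ f ⊂ H) →
    conn (A.faces.erase f) a b → conn (T.faces.erase f) a b := by
  intro A T h
  induction h using Relation.ReflTransGen.head_induction_on with
  | refl => exact fun _ _ _ hc => hc
  | head hstep htail ih =>
    intro f hfc hf hnocof hc
    obtain ⟨hf', hnocof'⟩ := c2_step_facts hstep hfc hf hnocof
    exact ih hfc hf' hnocof' (c2_conn_erase hstep hfc hnocof hc)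

theorem erase_comm3 {A : Finset (Finset ℕ)} {f p P : Finset ℕ} :
    ((A.erase f).erase p).erase P = ((A.erase p).erase P).erase f := by
  ext s; simp only [Finset.mem_erase]; tauto

theorem c2_transfer : ∀ {A T : SC}, Relation.ReflTransGen (C 2) A T →
    ∀ {f g : Finset ℕ}, f.card = 2 → g.card = 2 → f ∈ A.faces →
    (∀ H ∈ A.faces, ¬ f ⊂ H) → g ∉ A.faces →
    ∀ B : SC, B.faces = insert g (A.faces.erase f) →
    ∃ B' : SC, B'.faces = insert g (T.faces.erase f) ∧ Relation.ReflTransGen (C 2) B B' := by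
  intro A T h
  induction h using Relation.ReflTransGen.head_induction_on with
  | refl =>
    intro f g hfc hgc hf hnocof hg B hB
    exact ⟨B, hB, Relation.ReflTransGen.refl⟩
  | head hstep htail ih =>
    rename_i A A1
    intro f g hfc hgc hf hnocof hg B hB
    obtain ⟨p, P, hpc, hp, hP, hpP, huniq, hA1⟩ := hstep
    have hPc : P.card = 3 := c2_P_card (A' := A1) hpc hp hP hpP huniq
    have hpf : p ≠ f := fun h => hnocof P hP (h ▸ hpP)
    have hPf : P ≠ f := card_ne (by omega)
    have hpg : p ≠ g := fun h => hg (h ▸ hp)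
    have hPg : P ≠ g := card_ne (by omega)
    -- freeness of (p, P) in B
    have hpB : p ∈ B.faces := by
      rw [hB, Finset.mem_insert]
      exact Or.inr (Finset.mem_erase.2 ⟨hpf, hp⟩)
    have hPB : P ∈ B.faces := by
      rw [hB, Finset.mem_insert]
      exact Or.inr (Finset.mem_erase.2 ⟨hPf, hP⟩)
    have huniqB : ∀ H ∈ B.faces, p ⊂ H → H = P := by
      intro H hH hpH
      rw [hB, Finset.mem_insert] at hH
      rcases hH with rfl | hH
      · exfalso
        have := Finset.card_lt_card hpH
        omega
      · exact huniq H (Finset.mem_of_mem_erase hH) hpH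
    set B1 := B.del p P hpP huniqB with hB1def
    have hB1 : B1.faces = insert g (A1.faces.erase f) := by
      show (B.faces.erase p).erase P = _
      rw [hB, Finset.erase_insert_of_ne (Ne.symm hpg), Finset.erase_insert_of_ne (Ne.symm hPg),
        hA1, erase_comm3]
    obtain ⟨hf1, hnocof1⟩ := c2_step_facts ⟨p, P, hpc, hp, hP, hpP, huniq, hA1⟩ hfc hf hnocof
    have hg1 : g ∉ A1.faces := fun hh => hg (by rw [hA1] at hh; exact (mem_erase2.1 hh).2.2)
    obtain ⟨B', hB', hchain⟩ := ih hfc hgc hf1 hnocof1 hg1 B1 hB1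
    refine ⟨B', hB', Relation.ReflTransGen.head ⟨p, P, hpc, hpB, hPB, hpP, huniqB, rfl⟩ hchain⟩

theorem pair_card {a b : ℕ} (h : a ≠ b) : ({a, b} : Finset ℕ).card = 2 := by
  rw [Finset.card_insert_of_notMem (by simpa using h), Finset.card_singleton]

theorem mem_pair {a x y : ℕ} : a ∈ ({x, y} : Finset ℕ) ↔ a = x ∨ a = y := by
  simp [Finset.mem_insert, Finset.mem_singleton]

theorem exchange_triangle {K1 L : SC} {x y z : ℕ} (hxy : x ≠ y) (hyz : y ≠ z) (hxz : x ≠ z)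
    (hf : ({x, y} : Finset ℕ) ∈ K1.faces)
    (hnocof : ∀ H ∈ K1.faces, ¬ ({x, y} : Finset ℕ) ⊂ H)
    (hg : ({y, z} : Finset ℕ) ∉ K1.faces)
    (he : ({x, z} : Finset ℕ) ∈ K1.faces)
    (hdim : ∀ s ∈ K1.faces, s.card ≤ 3)
    (hcol : K1.Collapsible)
    (hL : L.faces = insert {y, z} (K1.faces.erase {x, y})) : L.Collapsible := by
  have hfc : ({x, y} : Finset ℕ).card = 2 := pair_card hxy
  have hgc : ({y, z} : Finset ℕ).card = 2 := pair_card hyz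
  obtain ⟨v, hv⟩ := hcol
  obtain ⟨TR, h2chain, h1chain⟩ := normal_form hv hdim
  obtain ⟨hfTR, hnocofTR⟩ := c2_chain_keeps h2chain hfc hf hnocof
  have hsubTR : TR.faces ⊆ K1.faces :=
    collapsesTo_subset (Relation.ReflTransGen.mono (fun _ _ h => C_elem h) _ _ h2chain)
  have hgTR : ({y, z} : Finset ℕ) ∉ TR.faces := fun h => hg (hsubTR h)
  obtain ⟨hcards, hcount, hconnAll⟩ := c1_chain_facts h1chain
  obtain ⟨B', hB', hchainB⟩ := c2_transfer h2chain hfc hgc hf hnocof hg L hL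
  -- key connectivity: x and z are joined avoiding the edge {x,y}
  have hexf : ({x, z} : Finset ℕ) ≠ {x, y} := by
    intro h
    have : z ∈ ({x, y} : Finset ℕ) := h ▸ mem_pair.2 (Or.inr rfl)
    rcases mem_pair.1 this with h' | h'
    · exact hxz h'.symm
    · exact hyz h'.symm
  have hekey : conn (K1.faces.erase {x, y}) x z :=
    Relation.ReflTransGen.single (Finset.mem_erase.2 ⟨hexf, he⟩)
  have hconnTRxz : conn (TR.faces.erase {x, y}) x z :=
    c2_chain_conn_erase h2chain hfc hf hnocof hekey
  -- B' is a tree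
  have hsubB : TR.faces.erase {x, y} ⊆ B'.faces := by
    rw [hB']; exact fun s hs => Finset.mem_insert.2 (Or.inr hs)
  have hgB : ({y, z} : Finset ℕ) ∈ B'.faces := by
    rw [hB']; exact Finset.mem_insert_self _ _
  have hxzB : conn B'.faces x z := conn_mono hsubB hconnTRxz
  have hxyB : conn B'.faces x y := by
    refine Relation.ReflTransGen.tail hxzB ?_
    rwa [Finset.pair_comm]
  have hcardB : B'.faces.card = TR.faces.card := by
    rw [hB', Finset.card_insert_of_notMem (fun h => hgTR (Finset.mem_of_mem_erase h)),
      Finset.card_erase_of_mem hfTR]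
    have : 0 < TR.faces.card := Finset.card_pos.2 ⟨_, hfTR⟩
    omega
  have hfiltB : B'.faces.filter (fun s => s.card = 1) = TR.faces.filter (fun s => s.card = 1) := by
    ext s
    rw [hB']
    simp only [Finset.mem_filter, Finset.mem_insert, Finset.mem_erase]
    constructor
    · rintro ⟨rfl | ⟨hsf, hsT⟩, hsc⟩
      · omega
      · exact ⟨hsT, hsc⟩
    · rintro ⟨hsT, hsc⟩
      exact ⟨Or.inr ⟨fun h => by rw [h] at hsc; omega, hsT⟩, hsc⟩
  have hcardsB : ∀ s ∈ B'.faces, s.card ≤ 2 := by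
    intro s hs
    rw [hB', Finset.mem_insert] at hs
    rcases hs with rfl | hs
    · omega
    · exact hcards s (Finset.mem_of_mem_erase hs)
  have hrer : ∀ a b, conn TR.faces a b → conn B'.faces a b := by
    intro a b hc
    induction hc with
    | refl => exact Relation.ReflTransGen.refl
    | tail hcd hstep ih =>
      rename_i c d
      refine Relation.ReflTransGen.trans ih ?_
      by_cases hcdf : ({c, d} : Finset ℕ) = {x, y}
      · have hcd2 : c ≠ d := by
          intro hcdeq
          rw [← hcdeq] at hcdf
          have : ({c} : Finset ℕ) = {x, y} := by
            rw [← hcdf]; simp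
          have := congrArg Finset.card this
          rw [Finset.card_singleton, hfc] at this
          omega
        have hcmem := hcdf ▸ (Finset.mem_insert_self c {d})
        have hdmem := hcdf ▸ (Finset.mem_insert.2 (Or.inr (Finset.mem_singleton_self d)))
        rcases mem_pair.1 hcmem with rfl | rfl <;> rcases mem_pair.1 hdmem with rfl | rfl
        · exact absurd rfl hcd2
        · exact hxyB
        · exact conn_symm hxyB
        · exact absurd rfl hcd2
      · exact Relation.ReflTransGen.single (hsubB (Finset.mem_erase.2 ⟨hcdf, hstep⟩))
  have hconnB : ∀ a b, ({a} : Finset ℕ) ∈ B'.faces → ({b} : Finset ℕ) ∈ B'.faces →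
      conn B'.faces a b := by
    intro a b ha hb
    have ha' : ({a} : Finset ℕ) ∈ TR.faces := by
      have : ({a} : Finset ℕ) ∈ B'.faces.filter (fun s => s.card = 1) :=
        Finset.mem_filter.2 ⟨ha, Finset.card_singleton a⟩
      rw [hfiltB] at this
      exact (Finset.mem_filter.1 this).1
    have hb' : ({b} : Finset ℕ) ∈ TR.faces := by
      have : ({b} : Finset ℕ) ∈ B'.faces.filter (fun s => s.card = 1) :=
        Finset.mem_filter.2 ⟨hb, Finset.card_singleton b⟩
      rw [hfiltB] at this
      exact (Finset.mem_filter.1 this).1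
    exact hrer a b (hconnAll a b ha' hb')
  have hcountB : B'.faces.card + 1 = 2 * (B'.faces.filter (fun s => s.card = 1)).card := by
    rw [hcardB, hfiltB]; exact hcount
  obtain ⟨w, hw⟩ := tree_collapsible B'.faces.card B' le_rfl hcardsB hcountB hconnB
  exact ⟨w, Relation.ReflTransGen.trans
    (Relation.ReflTransGen.mono (fun _ _ h => C_elem h) _ _ hchainB) hw⟩

theorem exchange_vertex {v : ℕ} : ∀ {N : SC}, N.CollapsesTo (pointSC v) →
    ∀ {a b : ℕ}, ({a} : Finset ℕ) ∈ N.faces → (∀ H ∈ N.faces, a ∈ H → H = {a}) →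
    (∀ H ∈ N.faces, b ∉ H) →
    ∀ L : SC, L.faces = insert {b} (N.faces.erase {a}) → L.Collapsible := by
  intro N h
  induction h using Relation.ReflTransGen.head_induction_on with
  | refl =>
    intro a b ha _ _ L hL
    have hav : ({a} : Finset ℕ) = {v} := Finset.mem_singleton.1 ha
    rw [show (pointSC v).faces = {{v}} from rfl, ← hav, Finset.erase_singleton] at hL
    rw [Finset.insert_empty] at hL
    have : L = pointSC b := SC.ext' (by rw [hL]; rfl)
    exact ⟨b, this ▸ Relation.ReflTransGen.refl⟩
  | head hstep htail ih =>
    rename_i C C1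
    intro a b ha hsingle hbnot L hL
    obtain ⟨p, P, hp, hP, hpP, huniq, hC1⟩ := hstep
    have hpne : p.Nonempty := C.nonempty_mem p hp
    have haP : a ∉ P := by
      intro haP
      have hPa : P = {a} := hsingle P hP haP
      have := Finset.card_lt_card hpP
      rw [hPa, Finset.card_singleton] at this
      have := Finset.card_pos.2 hpne
      omega
    have hap : a ∉ p := fun h => haP (hpP.subset h)
    have hbp : b ∉ p := hbnot p hp
    have hbP : b ∉ P := hbnot P hP
    have hpa : p ≠ {a} := fun h => hap (h ▸ Finset.mem_singleton_self a)
    have hPa : P ≠ {a} := fun h => haP (h ▸ Finset.mem_singleton_self a)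
    have ha1 : ({a} : Finset ℕ) ∈ C1.faces := by
      rw [hC1]; exact mem_erase2.2 ⟨Ne.symm hPa, Ne.symm hpa, ha⟩
    have hsingle1 : ∀ H ∈ C1.faces, a ∈ H → H = {a} := by
      intro H hH
      rw [hC1] at hH
      exact hsingle H (mem_erase2.1 hH).2.2
    have hbnot1 : ∀ H ∈ C1.faces, b ∉ H := by
      intro H hH
      rw [hC1] at hH
      exact hbnot H (mem_erase2.1 hH).2.2
    -- the pair (p, P) is free in L as well
    have hbpne : ({b} : Finset ℕ) ≠ p := fun h => hbp (h ▸ Finset.mem_singleton_self b)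
    have hbPne : ({b} : Finset ℕ) ≠ P := fun h => hbP (h ▸ Finset.mem_singleton_self b)
    have hpL : p ∈ L.faces := by
      rw [hL, Finset.mem_insert]
      exact Or.inr (Finset.mem_erase.2 ⟨hpa, hp⟩)
    have hPL : P ∈ L.faces := by
      rw [hL, Finset.mem_insert]
      exact Or.inr (Finset.mem_erase.2 ⟨hPa, hP⟩)
    have huniqL : ∀ H ∈ L.faces, p ⊂ H → H = P := by
      intro H hH hpH
      rw [hL, Finset.mem_insert] at hH
      rcases hH with rfl | hH
      · exfalso
        have := Finset.card_lt_card hpH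
        rw [Finset.card_singleton] at this
        have := Finset.card_pos.2 hpne
        omega
      · exact huniq H (Finset.mem_of_mem_erase hH) hpH
    set L1 := L.del p P hpP huniqL with hL1def
    have hL1 : L1.faces = insert {b} (C1.faces.erase {a}) := by
      show (L.faces.erase p).erase P = _
      rw [hL, Finset.erase_insert_of_ne hbpne, Finset.erase_insert_of_ne hbPne,
        hC1, erase_comm3]
    obtain ⟨w, hw⟩ := ih ha1 hsingle1 hbnot1 L1 hL1
    exact ⟨w, Relation.ReflTransGen.head ⟨p, P, hpL, hPL, hpP, huniqL, rfl⟩ hw⟩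

theorem faces_rearrange {A : Finset (Finset ℕ)} {f g F : Finset ℕ}
    (hgA : g ∈ A) (hgf : g ≠ f) (hgF : g ≠ F) :
    (A.erase f).erase F = insert g (((A.erase g).erase F).erase f) := by
  ext s
  simp only [Finset.mem_erase, Finset.mem_insert]
  constructor
  · rintro ⟨hsF, hsf, hsA⟩
    by_cases hsg : s = g
    · exact Or.inl hsg
    · exact Or.inr ⟨hsf, hsF, hsg, hsA⟩
  · rintro (rfl | ⟨hsf, hsF, hsg, hsA⟩)
    · exact ⟨hgF, hgf, hgA⟩
    · exact ⟨hsF, hsf, hsA⟩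

theorem greedy_step : ∀ n : ℕ, ∀ K : SC, K.faces.card ≤ n →
    (∀ s ∈ K.faces, s.card ≤ 3) → K.Collapsible →
    ∀ L : SC, K.ElemCollapse L → L.Collapsible := by
  intro n
  induction n with
  | zero =>
    intro K hn _ _ L hLc
    obtain ⟨f, F, hf, _⟩ := hLc
    rw [Nat.le_zero, Finset.card_eq_zero] at hn
    rw [hn] at hf
    exact absurd hf (Finset.notMem_empty f)
  | succ n ih =>
    intro K hn hdim hcol L hLc
    obtain ⟨f, F, hf, hF, hfF, hfuniq, hLfaces⟩ := hLc
    obtain ⟨v, hv⟩ := hcol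
    rcases Relation.ReflTransGen.cases_head hv with heq | ⟨K1, hstep, htail⟩
    · -- K is already a point: impossible, it has no free pair
      exfalso
      have hfv : f = {v} := by
        rw [heq] at hf; exact Finset.mem_singleton.1 hf
      have hFv : F = {v} := by
        rw [heq] at hF; exact Finset.mem_singleton.1 hF
      exact hfF.ne (hfv.trans hFv.symm)
    · obtain ⟨g, G, hg, hG, hgG, hguniq, hK1faces⟩ := hstep
      have hK1col : K1.Collapsible := ⟨v, htail⟩
      have hdim1 : ∀ s ∈ K1.faces, s.card ≤ 3 := by
        intro s hs; rw [hK1faces] at hs; exact hdim s (mem_erase2.1 hs).2.2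
      have hK1card : K1.faces.card ≤ n := by
        have hGg : G ∈ K.faces.erase g := Finset.mem_erase.2 ⟨(hgG.ne).symm, hG⟩
        rw [hK1faces, Finset.card_erase_of_mem hGg, Finset.card_erase_of_mem hg]
        omega
      by_cases hfg : f = g
      · -- identical collapse
        have hFG : F = G := hguniq F hF (hfg ▸ hfF)
        have : L = K1 := SC.ext' (by rw [hLfaces, hK1faces, hfg, hFG])
        exact this ▸ hK1col
      · by_cases hfG : f = G
        · exfalso
          have h1 : g ⊂ F := hfG ▸ hgG |>.trans hfF
          have hFGeq : F = G := hguniq F hF h1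
          exact hfF.ne (hfG.trans hFGeq.symm)
        · by_cases hFg : F = g
          · exfalso
            have h1 : f ⊂ G := hfF.trans (hFg ▸ hgG)
            have : G = F := hfuniq G hG h1
            exact hgG.ne ((this.trans hFg).symm)
          · by_cases hFG : F = G
            · -- shared coface: the exchange cases
              subst hFG
              have hfcard := free_card hF hfF (K.nonempty_mem f hf) hfuniq
              have hgcard := free_card hF hgG (K.nonempty_mem g hg) hguniq
              have hFle : F.card ≤ 3 := hdim F hF
              have hf1 : 1 ≤ f.card := Finset.card_pos.2 (K.nonempty_mem f hf)
              have hfmem1 : f ∈ K1.faces := by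
                rw [hK1faces]
                exact mem_erase2.2 ⟨fun h => hfF.ne h, hfg, hf⟩
              have hgnot1 : g ∉ K1.faces := by
                rw [hK1faces, mem_erase2]
                rintro ⟨_, h, _⟩; exact h rfl
              have hLrearr : L.faces = insert g (K1.faces.erase f) := by
                rw [hLfaces, hK1faces]
                exact faces_rearrange hg (Ne.symm hfg) hgG.ne
              have hf2 : f.card ≤ 2 := by omega
              interval_cases hfc : f.card
              · -- vertex case
                obtain ⟨a, rfl⟩ := Finset.card_eq_one.1 hfc
                have hgc1 : g.card = 1 := by omega
                obtain ⟨b, rfl⟩ := Finset.card_eq_one.1 hgc1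
                have hab : a ≠ b := fun h => hfg (by rw [h])
                have hsingle : ∀ H ∈ K1.faces, a ∈ H → H = {a} := by
                  intro H hH haH
                  by_contra hne
                  have hssub : ({a} : Finset ℕ) ⊂ H :=
                    lt_of_le_of_ne (Finset.singleton_subset_iff.2 haH) (Ne.symm hne)
                  rw [hK1faces] at hH
                  obtain ⟨hHG, _, hHK⟩ := mem_erase2.1 hH
                  exact hHG (hfuniq H hHK hssub)
                have hbnot : ∀ H ∈ K1.faces, b ∉ H := by
                  intro H hH hbH
                  rw [hK1faces] at hH
                  obtain ⟨hHG, hHg, hHK⟩ := mem_erase2.1 hH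
                  by_cases hne : H = {b}
                  · exact hHg hne
                  · exact hHG (hguniq H hHK
                      (lt_of_le_of_ne (Finset.singleton_subset_iff.2 hbH) (Ne.symm hne)))
                exact exchange_vertex htail hfmem1 hsingle hbnot L hLrearr
              · -- edge case
                have hgc2 : g.card = 2 := by omega
                have hFc3 : F.card = 3 := by omega
                -- extract the common vertex y and the other vertices x, z
                have hinter : (f ∩ g).Nonempty := by
                  rw [← Finset.card_pos]
                  have hsub : f ∪ g ⊆ F := Finset.union_subset hfF.subset hgG.subset
                  have h1 := Finset.card_le_card hsub
                  have h2 := Finset.card_union_add_card_inter f g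
                  omega
                obtain ⟨y, hy⟩ := hinter
                have hyf : y ∈ f := (Finset.mem_inter.1 hy).1
                have hyg : y ∈ g := (Finset.mem_inter.1 hy).2
                have hxex : ∃ x, x ≠ y ∧ x ∈ f ∧ f = {x, y} := by
                  have hc : (f.erase y).card = 1 := by
                    rw [Finset.card_erase_of_mem hyf]; omega
                  obtain ⟨x, hx⟩ := Finset.card_eq_one.1 hc
                  have hxmem : x ∈ f.erase y := hx ▸ Finset.mem_singleton_self x
                  refine ⟨x, (Finset.mem_erase.1 hxmem).1, (Finset.mem_erase.1 hxmem).2, ?_⟩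
                  rw [Finset.pair_comm, ← hx, Finset.insert_erase hyf]
                obtain ⟨x, hxy, hxf, hfeq⟩ := hxex
                have hzex : ∃ z, z ≠ y ∧ z ∈ g ∧ g = {y, z} := by
                  have hc : (g.erase y).card = 1 := by
                    rw [Finset.card_erase_of_mem hyg]; omega
                  obtain ⟨z, hz⟩ := Finset.card_eq_one.1 hc
                  have hzmem : z ∈ g.erase y := hz ▸ Finset.mem_singleton_self z
                  refine ⟨z, (Finset.mem_erase.1 hzmem).1, (Finset.mem_erase.1 hzmem).2, ?_⟩
                  rw [← hz, Finset.insert_erase hyg]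
                obtain ⟨z, hzy, hzg, hgeq⟩ := hzex
                have hzf : z ∉ f := by
                  intro hzf
                  apply hfg
                  have hsub : g ⊆ f := by
                    rw [hgeq]
                    exact Finset.insert_subset hyf (Finset.singleton_subset_iff.2 hzf)
                  exact (Finset.eq_of_subset_of_card_le hsub (by omega)).symm
                have hxz : x ≠ z := fun h => hzf (h ▸ hxf)
                have hxg : x ∉ g := by
                  intro hxg
                  apply hfg
                  have hsub : f ⊆ g := by
                    rw [hfeq]
                    exact Finset.insert_subset hxg (Finset.singleton_subset_iff.2 hyg)
                  exact Finset.eq_of_subset_of_card_le hsub (by omega)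
                -- the third edge e = {x, z} of F is in K1
                have hxF : x ∈ F := hfF.subset hxf
                have hzF : z ∈ F := hgG.subset hzg
                have heF : ({x, z} : Finset ℕ) ⊆ F :=
                  Finset.insert_subset hxF (Finset.singleton_subset_iff.2 hzF)
                have heK : ({x, z} : Finset ℕ) ∈ K.faces :=
                  K.down_closed F hF _ heF ⟨x, Finset.mem_insert_self x {z}⟩
                have heK1 : ({x, z} : Finset ℕ) ∈ K1.faces := by
                  rw [hK1faces]
                  refine mem_erase2.2 ⟨card_ne (by rw [pair_card hxz]; omega), ?_, heK⟩
                  intro hh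
                  rw [hgeq] at hh
                  have : x ∈ ({y, z} : Finset ℕ) := hh ▸ Finset.mem_insert_self x {z}
                  rcases mem_pair.1 this with h' | h'
                  · exact hxy h'
                  · exact hxz h'
                have hnocof1 : ∀ H ∈ K1.faces, ¬ ({x, y} : Finset ℕ) ⊂ H := by
                  intro H hH hcof
                  rw [hK1faces] at hH
                  obtain ⟨hHG, _, hHK⟩ := mem_erase2.1 hH
                  exact hHG (hfuniq H hHK (hfeq ▸ hcof))
                rw [hfeq] at hfmem1
                rw [hgeq] at hgnot1
                rw [hfeq, hgeq] at hLrearr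
                exact exchange_triangle hxy (fun h => hzy h.symm) hxz hfmem1 hnocof1
                  hgnot1 heK1 hdim1 hK1col hLrearr
            · -- disjoint pairs: diamond argument
              have hgf' : g ≠ f := Ne.symm hfg
              have hgF' : g ≠ F := Ne.symm hFg
              have hGf' : G ≠ f := Ne.symm hfG
              have hGF' : G ≠ F := Ne.symm hFG
              have hgL : g ∈ L.faces := by
                rw [hLfaces]; exact mem_erase2.2 ⟨hgF', hgf', hg⟩
              have hGL : G ∈ L.faces := by
                rw [hLfaces]; exact mem_erase2.2 ⟨hGF', hGf', hG⟩
              have hguniqL : ∀ H ∈ L.faces, g ⊂ H → H = G := by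
                intro H hH
                rw [hLfaces] at hH
                exact hguniq H (mem_erase2.1 hH).2.2
              have hfK1 : f ∈ K1.faces := by
                rw [hK1faces]; exact mem_erase2.2 ⟨hfG, hfg, hf⟩
              have hFK1 : F ∈ K1.faces := by
                rw [hK1faces]; exact mem_erase2.2 ⟨hFG, hFg, hF⟩
              have hfuniqK1 : ∀ H ∈ K1.faces, f ⊂ H → H = F := by
                intro H hH
                rw [hK1faces] at hH
                exact hfuniq H (mem_erase2.1 hH).2.2
              set K2 := K1.del f F hfF hfuniqK1 with hK2def
              have hK2col : K2.Collapsible := ih K1 hK1card hdim1 hK1col K2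
                (SC.elemCollapse_del K1 f F hfK1 hFK1 hfF hfuniqK1)
              set L2 := L.del g G hgG hguniqL with hL2def
              have hL2K2 : L2 = K2 := by
                apply SC.ext'
                show (L.faces.erase g).erase G = (K1.faces.erase f).erase F
                rw [hLfaces, hK1faces]
                ext s
                simp only [Finset.mem_erase]
                tauto
              obtain ⟨w, hw⟩ := hK2col
              exact ⟨w, Relation.ReflTransGen.head
                ⟨g, G, hgL, hGL, hgG, hguniqL, rfl⟩ (hL2K2 ▸ hw)⟩

theorem two_dimensional_extendably_collapsible' (K : SC)
    (hdim : ∀ s ∈ K.faces, s.card ≤ 3) (h : K.Collapsible) :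
    K.Collapsible ∧ ∀ L : SC, K.CollapsesTo L → L.Collapsible := by
  refine ⟨h, ?_⟩
  have main : ∀ L : SC, K.CollapsesTo L →
      L.Collapsible ∧ (∀ s ∈ L.faces, s.card ≤ 3) := by
    intro L hKL
    induction hKL with
    | refl => exact ⟨h, hdim⟩
    | tail hKM hstep ih =>
      refine ⟨greedy_step _ _ le_rfl ih.2 ih.1 _ hstep, ?_⟩
      intro s hs
      exact ih.2 s (collapse_subset hstep hs)
  exact fun L hKL => (main L hKL).1

/-- For 2-dimensional complexes collapsibility is decided greedily: every
collapsible 2-complex is extendably collapsible, i.e. if some sequence of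
elementary collapses reduces K to a point then every maximal sequence does. -/
theorem two_dimensional_extendably_collapsible (K : SC)
    (hdim : ∀ s ∈ K.faces, s.card ≤ 3) (h : K.Collapsible) :
    K.ExtendablyCollapsible :=
  two_dimensional_extendably_collapsible' K hdim h
end

section
/- If M is a finite simplicial complex in which every (d-1)-face lies in exactly two d-faces (a closed pseudomanifold) and F is a facet, then in any collapse of M - F onto a (d-1)-dimensional complex, the set of removed pairs (ridge, facet) forms a spanning tree of the dual graph of M rooted at F. -/
/-- A single elementary collapse step, removing the free face `f` together with
the unique face `F` properly containing it. -/
def CollapseStep (K : SC) (f F : Finset ℕ) (K' : SC) : Prop :=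
  f ∈ K.faces ∧ F ∈ K.faces ∧ f ⊂ F ∧ (∀ G ∈ K.faces, f ⊂ G → G = F) ∧
    K'.faces = (K.faces.erase f).erase F

/-- A sequence of elementary collapses recorded by its list of removed pairs. -/
def CollapseSeq : SC → List (Finset ℕ × Finset ℕ) → SC → Prop
  | K, [], L => K = L
  | K, p :: rest, L => ∃ K' : SC, CollapseStep K p.1 p.2 K' ∧ CollapseSeq K' rest L

/-- The dual graph of a pure d-dimensional complex: vertices are the facets,
two facets being adjacent when they share a (d-1)-face. -/
def dualGraph (M : SC) (d : ℕ) :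
    SimpleGraph {A : Finset ℕ // A ∈ M.faces ∧ A.card = d + 1} where
  Adj A B := A ≠ B ∧ (A.1 ∩ B.1).card = d
  symm := by constructor; intro A B h; exact ⟨h.1.symm, by rw [Finset.inter_comm]; exact h.2⟩
  loopless := by constructor; intro A h; exact h.1 rfl

/-- The graph on the facets of M whose edges are the pairs of facets sharing a
(d-1)-face removed in some collapse step. -/
def stepGraph (M : SC) (d : ℕ) (steps : List (Finset ℕ × Finset ℕ)) :
    SimpleGraph {A : Finset ℕ // A ∈ M.faces ∧ A.card = d + 1} where
  Adj A B := A ≠ B ∧ ∃ p ∈ steps, p.1.card = d ∧ p.1 ⊆ A.1 ∧ p.1 ⊆ B.1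
  symm := by
    constructor
    intro A B h
    exact ⟨h.1.symm, by obtain ⟨p, hp, h1, h2, h3⟩ := h.2; exact ⟨p, hp, h1, h3, h2⟩⟩
  loopless := by constructor; intro A h; exact h.1 rfl

open SimpleGraph in
lemma cycle_two_neighbors {V : Type*} {G : SimpleGraph V} {u : V} (c : G.Walk u u)
    (hc : c.IsCycle) : ∃ b e, G.Adj u b ∧ G.Adj u e ∧ b ≠ e ∧
      b ∈ c.support.tail ∧ e ∈ c.support.tail := by
  cases c with
  | nil => exact absurd hc Walk.IsCycle.not_of_nil
  | @cons _ b _ hadj q =>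
    have hnodup : (Walk.cons hadj q).edges.Nodup := hc.isCircuit.isTrail.edges_nodup
    rw [Walk.edges_cons, List.nodup_cons] at hnodup
    cases hq : q.reverse with
    | nil => exact absurd hadj (G.loopless.irrefl u)
    | @cons _ e _ hadj2 q2 =>
      refine ⟨b, e, hadj, hadj2, ?_, ?_, ?_⟩
      · -- b ≠ e
        intro hbe
        apply hnodup.1
        have h1 : s(u, e) ∈ q.reverse.edges := by
          rw [hq, Walk.edges_cons]; exact List.mem_cons_self
        rw [Walk.edges_reverse, List.mem_reverse] at h1
        exact hbe ▸ h1
      · rw [Walk.support_cons, List.tail_cons]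
        exact q.start_mem_support
      · rw [Walk.support_cons, List.tail_cons]
        have h1 : e ∈ q.reverse.support := by
          rw [hq, Walk.support_cons]
          exact List.mem_cons_of_mem _ q2.start_mem_support
        rw [Walk.support_reverse, List.mem_reverse] at h1
        exact h1


lemma grand (d : ℕ) (M L : SC) (hcard : ∀ s ∈ M.faces, s.card ≤ d + 1)
    (hL : ∀ s ∈ L.faces, s.card ≤ d) :
    ∀ (steps : List (Finset ℕ × Finset ℕ)) (K : SC),
      CollapseSeq K steps L → K.faces ⊆ M.faces →
    ∃ r : Finset ℕ → ℕ,
      (∀ A ∈ M.faces, A.card = d + 1 → (r A = 0 ↔ A ∉ K.faces)) ∧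
      (∀ p ∈ steps, p.1 ∈ K.faces ∧ p.2 ∈ K.faces) ∧
      (∀ p ∈ steps, ∀ q ∈ steps, p.2 = q.2 → p = q) ∧
      (∀ A ∈ K.faces, A.card = d + 1 → ∃ p, p ∈ steps ∧ p.2 = A ∧ p.1.card = d ∧ p.1 ⊆ A) ∧
      (∀ p ∈ steps, p.1.card = d → p.2 ∈ M.faces ∧ p.2.card = d + 1 ∧ p.1 ⊆ p.2 ∧
        ∀ B ∈ M.faces, B.card = d + 1 → p.1 ⊆ B → B ≠ p.2 → r B < r p.2) := by
  intro steps
  induction steps with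
  | nil =>
    intro K hcol hKM
    have hKL : K = L := hcol
    subst hKL
    refine ⟨fun _ => 0, ?_, ?_, ?_, ?_, ?_⟩
    · intro A _ hAc
      simp only [true_iff, eq_self_iff_true]
      intro hA
      have := hL A hA
      omega
    · intro p hp; simp at hp
    · intro p hp; simp at hp
    · intro A hA hAc
      have := hL A hA
      omega
    · intro p hp; simp at hp
  | cons p rest ih =>
    intro K hcol hKM
    obtain ⟨K1, hstep, hrest⟩ := hcol
    obtain ⟨hp1K, hp2K, hss, huniq, hK1⟩ := hstep
    have hK1sub : K1.faces ⊆ K.faces := by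
      rw [hK1]
      exact (Finset.erase_subset _ _).trans (Finset.erase_subset _ _)
    have hK1M : K1.faces ⊆ M.faces := hK1sub.trans hKM
    obtain ⟨r', P0, P4, P3, P2, P1⟩ := ih K1 hrest hK1M
    classical
    refine ⟨fun A => if A ∈ K.faces then r' A + 1 else 0, ?_, ?_, ?_, ?_, ?_⟩
    · -- P0
      intro A _ _
      by_cases hA : A ∈ K.faces <;> simp [hA]
    · -- P4
      intro q hq
      rcases List.mem_cons.mp hq with rfl | hq
      · exact ⟨hp1K, hp2K⟩
      · exact ⟨hK1sub (P4 q hq).1, hK1sub (P4 q hq).2⟩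
    · -- P3
      have hp2notK1 : p.2 ∉ K1.faces := by
        rw [hK1]; simp
      intro a ha b hb hab
      rcases List.mem_cons.mp ha with ha' | ha' <;> rcases List.mem_cons.mp hb with hb' | hb'
      · rw [ha', hb']
      · exact absurd ((P4 b hb').2) (by rw [← hab, ha']; exact hp2notK1)
      · exact absurd ((P4 a ha').2) (by rw [hab, hb']; exact hp2notK1)
      · exact P3 a ha' b hb' hab
    · -- P2
      intro A hA hAc
      by_cases hA1 : A ∈ K1.faces
      · obtain ⟨q, hq, h2, h3, h4⟩ := P2 A hA1 hAc
        exact ⟨q, List.mem_cons_of_mem _ hq, h2, h3, h4⟩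
      · have hAeq : A = p.1 ∨ A = p.2 := by
          rw [hK1] at hA1
          simp only [Finset.mem_erase, not_and, not_not] at hA1
          tauto
        rcases hAeq with heq | heq
        · -- A = p.1 : impossible, p.2 would have card ≥ d+2
          exfalso
          have h1 : p.1.card < p.2.card := Finset.card_lt_card hss
          have h2 : p.2.card ≤ d + 1 := hcard p.2 (hKM hp2K)
          rw [heq] at hAc
          omega
        · -- A = p.2
          refine ⟨p, List.mem_cons_self, heq.symm, ?_, by rw [heq]; exact hss.subset⟩
          have hlt : p.1.card < p.2.card := Finset.card_lt_card hss
          rw [heq] at hAc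
          by_contra hne
          have hlt2 : p.1.card < d := by omega
          obtain ⟨x, hxA, hxp1⟩ := Finset.exists_of_ssubset hss
          have ht : insert x p.1 ∈ K.faces :=
            K.down_closed p.2 hp2K (insert x p.1)
              (Finset.insert_subset hxA hss.subset) ⟨x, Finset.mem_insert_self _ _⟩
          have h5 := huniq (insert x p.1) ht (Finset.ssubset_insert hxp1)
          have hc : (insert x p.1).card = p.1.card + 1 := Finset.card_insert_of_notMem hxp1
          rw [h5] at hc
          omega
    · -- P1
      intro q hq hqc
      rcases List.mem_cons.mp hq with hq' | hq'
      · -- head step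
        rw [hq'] at hqc ⊢
        have hp2M : p.2 ∈ M.faces := hKM hp2K
        have hlt : p.1.card < p.2.card := Finset.card_lt_card hss
        have hc2 : p.2.card = d + 1 := by
          have := hcard p.2 hp2M
          omega
        refine ⟨hp2M, hc2, hss.subset, ?_⟩
        intro B hBM hBc hsubB hBne
        have hBnotK : B ∉ K.faces := by
          intro hBK
          exact hBne (huniq B hBK (lt_of_le_of_ne (α := Finset ℕ) hsubB (by
            intro h; rw [← h] at hBc; omega)))
        simp only [hBnotK, if_neg, if_pos hp2K, if_false]
        omega
      · -- rest step
        obtain ⟨hM2, hc2, hsub2, hB⟩ := P1 q hq' hqc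
        have hq2K : q.2 ∈ K.faces := hK1sub (P4 q hq').2
        refine ⟨hM2, hc2, hsub2, ?_⟩
        intro B hBM hBc hsubB hBne
        have := hB B hBM hBc hsubB hBne
        by_cases hBK : B ∈ K.faces <;> simp [hBK, hq2K] <;> omega

/-- In a closed pseudomanifold M with facet F, any collapse of M - F onto a
(d-1)-dimensional complex removes the d-faces along a spanning tree of the dual
graph of M rooted at F. -/
theorem collapse_gives_dual_spanning_tree (d : ℕ) (M : SC)
    (hpure : ∀ s ∈ M.faces, ∃ F ∈ M.faces, s ⊆ F ∧ F.card = d + 1)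
    (hpm : ∀ r ∈ M.faces, r.card = d →
      (M.faces.filter fun F => F.card = d + 1 ∧ r ⊆ F).card = 2)
    (F : Finset ℕ) (hF : F ∈ M.faces) (hFcard : F.card = d + 1)
    (M' : SC) (hM' : M'.faces = M.faces.erase F)
    (steps : List (Finset ℕ × Finset ℕ)) (L : SC)
    (hcol : CollapseSeq M' steps L) (hL : ∀ s ∈ L.faces, s.card ≤ d) :
    (stepGraph M d steps).IsTree ∧
    (∀ A ∈ M.faces, A.card = d + 1 → A ≠ F →
      ∃! p : Finset ℕ × Finset ℕ, p ∈ steps ∧ p.2 = A) := by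
  classical
  have hcard : ∀ s ∈ M.faces, s.card ≤ d + 1 := by
    intro s hs
    obtain ⟨G, hG, hsG, hGc⟩ := hpure s hs
    have := Finset.card_le_card hsG
    omega
  have hM'M : M'.faces ⊆ M.faces := by rw [hM']; exact Finset.erase_subset _ _
  obtain ⟨r, P0, P4, P3, P2, P1⟩ := grand d M L hcard hL steps M' hcol hM'M
  have part2 : ∀ A ∈ M.faces, A.card = d + 1 → A ≠ F →
      ∃! p : Finset ℕ × Finset ℕ, p ∈ steps ∧ p.2 = A := by
    intro A hA hAc hAF
    have hAM' : A ∈ M'.faces := by rw [hM']; exact Finset.mem_erase.mpr ⟨hAF, hA⟩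
    obtain ⟨p, hps, hp2, _, _⟩ := P2 A hAM' hAc
    exact ⟨p, ⟨hps, hp2⟩, fun q hq => P3 q hq.1 p hps (hq.2.trans hp2.symm)⟩
  refine ⟨?_, part2⟩
  haveI : Fintype {A : Finset ℕ // A ∈ M.faces ∧ A.card = d + 1} :=
    Fintype.subtype (M.faces.filter fun A => A.card = d + 1)
      (by intro x; simp [Finset.mem_filter, and_comm])
  set V : Type := {A : Finset ℕ // A ∈ M.faces ∧ A.card = d + 1} with hV
  let Fv : V := ⟨F, hF, hFcard⟩
  have hVne : ∀ {A B : V}, A ≠ B → A.1 ≠ B.1 := fun h h' => h (Subtype.ext h')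
  have hr0 : ∀ A : V, (r A.1 = 0 ↔ A.1 = F) := by
    intro A
    have h := P0 A.1 A.2.1 A.2.2
    rw [hM'] at h
    rw [h]
    constructor
    · intro hnot
      by_contra hne
      exact hnot (Finset.mem_erase.mpr ⟨hne, A.2.1⟩)
    · intro he hmem
      exact (Finset.mem_erase.mp hmem).1 he
  have adjkey : ∀ A B : V, (stepGraph M d steps).Adj A B →
      ∃ p ∈ steps, p.1.card = d ∧ p.1 ⊆ A.1 ∧ p.1 ⊆ B.1 ∧ (p.2 = A.1 ∨ p.2 = B.1) := by
    intro A B hadj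
    obtain ⟨hne, p, hps, hpc, hpA, hpB⟩ := hadj
    refine ⟨p, hps, hpc, hpA, hpB, ?_⟩
    by_contra hcon
    push_neg at hcon
    obtain ⟨h1, h2⟩ := hcon
    have hp1M : p.1 ∈ M.faces := hM'M (P4 p hps).1
    have h2card := hpm p.1 hp1M hpc
    obtain ⟨hp2M, hp2c, hp12, _⟩ := P1 p hps hpc
    have hsub : ({p.2, A.1, B.1} : Finset (Finset ℕ)) ⊆
        M.faces.filter (fun G => G.card = d + 1 ∧ p.1 ⊆ G) := by
      intro X hX
      simp only [Finset.mem_insert, Finset.mem_singleton] at hX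
      rcases hX with rfl | rfl | rfl
      · exact Finset.mem_filter.mpr ⟨hp2M, hp2c, hp12⟩
      · exact Finset.mem_filter.mpr ⟨A.2.1, A.2.2, hpA⟩
      · exact Finset.mem_filter.mpr ⟨B.2.1, B.2.2, hpB⟩
    have h3 : ({p.2, A.1, B.1} : Finset (Finset ℕ)).card = 3 := by
      rw [Finset.card_insert_of_notMem (by simp [h1, h2]),
        Finset.card_insert_of_notMem (by simp [hVne hne]), Finset.card_singleton]
    have h4 := Finset.card_le_card hsub
    rw [h3, h2card] at h4
    omega
  have hdown : ∀ A B : V, (stepGraph M d steps).Adj A B → r B.1 < r A.1 →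
      ∃ p ∈ steps, p.2 = A.1 ∧ p.1.card = d ∧ p.1 ⊆ B.1 := by
    intro A B hadj hlt
    obtain ⟨p, hps, hpc, hpA, hpB, hor⟩ := adjkey A B hadj
    rcases hor with h | h
    · exact ⟨p, hps, h, hpc, hpB⟩
    · exfalso
      obtain ⟨_, _, _, hBs⟩ := P1 p hps hpc
      have h5 := hBs A.1 A.2.1 A.2.2 hpA (by rw [h]; exact hVne hadj.ne)
      rw [h] at h5
      omega
  have hner : ∀ A B : V, (stepGraph M d steps).Adj A B → r A.1 ≠ r B.1 := by
    intro A B hadj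
    obtain ⟨p, hps, hpc, hpA, hpB, hor⟩ := adjkey A B hadj
    obtain ⟨_, _, _, hBs⟩ := P1 p hps hpc
    rcases hor with h | h
    · have h5 := hBs B.1 B.2.1 B.2.2 hpB (by rw [h]; exact (hVne hadj.ne).symm)
      rw [h] at h5
      omega
    · have h5 := hBs A.1 A.2.1 A.2.2 hpA (by rw [h]; exact hVne hadj.ne)
      rw [h] at h5
      omega
  have huniq3 : ∀ A B C : V, (stepGraph M d steps).Adj A B → (stepGraph M d steps).Adj A C →
      r B.1 < r A.1 → r C.1 < r A.1 → B = C := by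
    intro A B C hAB hAC hB hC
    obtain ⟨p, hps, hp2, hpc, hpB⟩ := hdown A B hAB hB
    obtain ⟨q, hqs, hq2, hqc, hqC⟩ := hdown A C hAC hC
    have hpq : p = q := P3 p hps q hqs (hp2.trans hq2.symm)
    subst hpq
    have hp1M : p.1 ∈ M.faces := hM'M (P4 p hps).1
    have h2card := hpm p.1 hp1M hpc
    obtain ⟨hp2M, hp2cd, hp12, _⟩ := P1 p hps hpc
    have hp2s : p.2 ∈ M.faces.filter (fun G => G.card = d + 1 ∧ p.1 ⊆ G) :=
      Finset.mem_filter.mpr ⟨hp2M, hp2cd, hp12⟩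
    have hBs : B.1 ∈ (M.faces.filter (fun G => G.card = d + 1 ∧ p.1 ⊆ G)).erase p.2 :=
      Finset.mem_erase.mpr ⟨by rw [hp2]; exact (hVne hAB.ne).symm,
        Finset.mem_filter.mpr ⟨B.2.1, B.2.2, hpB⟩⟩
    have hCs : C.1 ∈ (M.faces.filter (fun G => G.card = d + 1 ∧ p.1 ⊆ G)).erase p.2 :=
      Finset.mem_erase.mpr ⟨by rw [hq2]; exact (hVne hAC.ne).symm,
        Finset.mem_filter.mpr ⟨C.2.1, C.2.2, hqC⟩⟩
    have hc1 : ((M.faces.filter (fun G => G.card = d + 1 ∧ p.1 ⊆ G)).erase p.2).card = 1 := by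
      rw [Finset.card_erase_of_mem hp2s, h2card]
    exact Subtype.ext (Finset.card_le_one.mp (le_of_eq hc1) _ hBs _ hCs)
  have hparent : ∀ A : V, A.1 ≠ F →
      ∃ B : V, (stepGraph M d steps).Adj A B ∧ r B.1 < r A.1 := by
    intro A hAF
    have hAM' : A.1 ∈ M'.faces := by rw [hM']; exact Finset.mem_erase.mpr ⟨hAF, A.2.1⟩
    obtain ⟨p, hps, hp2, hpc, hpA⟩ := P2 A.1 hAM' A.2.2
    have hp1M : p.1 ∈ M.faces := hM'M (P4 p hps).1
    have h2card := hpm p.1 hp1M hpc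
    have hAs : A.1 ∈ M.faces.filter (fun G => G.card = d + 1 ∧ p.1 ⊆ G) :=
      Finset.mem_filter.mpr ⟨A.2.1, A.2.2, hpA⟩
    have hc1 : ((M.faces.filter (fun G => G.card = d + 1 ∧ p.1 ⊆ G)).erase A.1).card = 1 := by
      rw [Finset.card_erase_of_mem hAs, h2card]
    obtain ⟨B, hB⟩ := Finset.card_eq_one.mp hc1
    have hBmem : B ∈ (M.faces.filter (fun G => G.card = d + 1 ∧ p.1 ⊆ G)).erase A.1 := by
      rw [hB]; exact Finset.mem_singleton_self B
    obtain ⟨hBne, hBs⟩ := Finset.mem_erase.mp hBmem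
    obtain ⟨hBM, hBc, hBsub⟩ := Finset.mem_filter.mp hBs
    refine ⟨⟨B, hBM, hBc⟩, ⟨fun h => hBne (congrArg Subtype.val h).symm, p, hps, hpc, hpA, hBsub⟩, ?_⟩
    obtain ⟨_, _, _, hBs'⟩ := P1 p hps hpc
    have h5 := hBs' B hBM hBc hBsub (by rw [hp2]; exact hBne)
    rw [hp2] at h5
    exact h5
  have reach : ∀ n (A : V), r A.1 ≤ n → (stepGraph M d steps).Reachable Fv A := by
    intro n
    induction n with
    | zero =>
      intro A h
      have h1 : A.1 = F := (hr0 A).mp (Nat.le_zero.mp h)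
      have h2 : A = Fv := Subtype.ext h1
      rw [h2]
    | succ n ihn =>
      intro A h
      by_cases hAF : A.1 = F
      · rw [show A = Fv from Subtype.ext hAF]
      · obtain ⟨B, hadj, hlt⟩ := hparent A hAF
        exact (ihn B (by omega)).trans hadj.symm.reachable
  have hconn : (stepGraph M d steps).Connected := by
    rw [SimpleGraph.connected_iff]
    exact ⟨fun A B => (reach _ A le_rfl).symm.trans (reach _ B le_rfl), ⟨Fv⟩⟩
  have hacyc : (stepGraph M d steps).IsAcyclic := by
    intro v c hc
    have hlen : 0 < c.support.tail.length := by
      have h1 := c.length_support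
      have h2 := hc.three_le_length
      have h3 : c.support.tail.length = c.support.length - 1 := by
        cases hs : c.support with
        | nil => exact absurd hs c.support_ne_nil
        | cons a l => simp
      omega
    obtain ⟨u0, hu0⟩ := List.exists_mem_of_length_pos hlen
    obtain ⟨u, hu, hmax⟩ := Finset.exists_max_image c.support.tail.toFinset
      (fun A => r A.1) ⟨u0, List.mem_toFinset.mpr hu0⟩
    have humem : u ∈ c.support := List.mem_of_mem_tail (List.mem_toFinset.mp hu)
    have hc' : (c.rotate u humem).IsCycle := hc.rotate humem
    have hperm := SimpleGraph.Walk.support_rotate c u humem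
    obtain ⟨b, e, hadjb, hadje, hbe, hbmem, hemem⟩ := cycle_two_neighbors _ hc'
    have hmaxb : r b.1 < r u.1 := by
      have h1 := hmax b (List.mem_toFinset.mpr (hperm.mem_iff.mp hbmem))
      have h2 := hner u b hadjb
      omega
    have hmaxe : r e.1 < r u.1 := by
      have h1 := hmax e (List.mem_toFinset.mpr (hperm.mem_iff.mp hemem))
      have h2 := hner u e hadje
      omega
    exact hbe (huniq3 u b e hadjb hadje hmaxb hmaxe)
  exact ⟨hconn, hacyc⟩
end
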